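/- Let α > 0, β > 0 and 0 ≤ c < 1, and set s = √(1−c²) and γ' = c/s. For every n ∈ ℕ the following two identities hold for all real x: J_{n+1}(x;α,β,c) − A_n^J·J_n(x;α,β,c) = (x−1)·(−1)^n·s^n·C_n(−x/s; (β−1)/2, (α+1)/2, γ') (Christoffel transformation with parameter 1), and J_n(x;α,β,c) = (−1)^n·s^n·( C_n(−x/s; (β−1)/2, (α+1)/2, γ') + (C_n^J/s)·C_{n−1}(−x/s; (β−1)/2, (α+1)/2, γ') ) (Geronimus transformation), where A_n^J = (1+c)(n+α+1)/(2n+α+β+2) for n even, A_n^J = (1−c)(n+α+β+1)/(2n+α+β+2) for n odd, C_n^J = (1−c)n/(2n+α+β) for n even, and C_n^J = (1+c)(n+β)/(2n+α+β) for n odd. -/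
import Mathlib


open Polynomial

/-- The coefficient `Aₙᴶ` of the monic big `-1` Jacobi recurrence. -/
noncomputable def bigM1A (α β c : ℝ) (n : ℕ) : ℝ :=
  if Even n then (1 + c) * ((n : ℝ) + α + 1) / (2 * (n : ℝ) + α + β + 2)
  else (1 - c) * ((n : ℝ) + α + β + 1) / (2 * (n : ℝ) + α + β + 2)

/-- The coefficient `Cₙᴶ` of the monic big `-1` Jacobi recurrence. -/
noncomputable def bigM1C (α β c : ℝ) (n : ℕ) : ℝ :=
  if Even n then (1 - c) * (n : ℝ) / (2 * (n : ℝ) + α + β)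
  else (1 + c) * ((n : ℝ) + β) / (2 * (n : ℝ) + α + β)

/-- Monic big `-1` Jacobi polynomials, shifted so that `bigM1Jacobi α β c (n+1) = Jₙ`
(`bigM1Jacobi α β c 0 = J₋₁ = 0`).  The recurrence is
`J_{n+1} = (x - (1 - Aₙᴶ - Cₙᴶ)) Jₙ - Aᴶ_{n-1} Cₙᴶ J_{n-1}`. -/
noncomputable def bigM1Jacobi (α β c : ℝ) : ℕ → Polynomial ℝ
  | 0 => 0
  | 1 => 1
  | (k + 2) =>
      (X - C (1 - bigM1A α β c k - bigM1C α β c k)) * bigM1Jacobi α β c (k + 1)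
        - C (bigM1A α β c (k - 1) * bigM1C α β c k) * bigM1Jacobi α β c k

/-- The recurrence coefficients `σₙ` of the monic Chihara polynomials. -/
noncomputable def chiharaSigma (α β : ℝ) (n : ℕ) : ℝ :=
  let m : ℕ := n / 2
  if Even n then
    (m : ℝ) * ((m : ℝ) + β) / ((2 * (m : ℝ) + α + β) * (2 * (m : ℝ) + α + β + 1))
  else
    ((m : ℝ) + α + 1) * ((m : ℝ) + α + β + 1) /
      ((2 * (m : ℝ) + α + β + 1) * (2 * (m : ℝ) + α + β + 2))

/-- Monic Chihara polynomials, shifted so that `chihara α β γ (n+1) = Cₙ(x;α,β,γ)`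
(`chihara α β γ 0 = C₋₁ = 0`).  The recurrence is
`C_{n+1} = (x - (-1)ⁿ γ) Cₙ - σₙ C_{n-1}`. -/
noncomputable def chihara (α β γ : ℝ) : ℕ → Polynomial ℝ
  | 0 => 0
  | 1 => 1
  | (k + 2) =>
      (X - C ((-1 : ℝ) ^ k * γ)) * chihara α β γ (k + 1)
        - C (chiharaSigma α β k) * chihara α β γ k


private lemma bigM1_I1 (α β c : ℝ) (hα : α > 0) (hβ : β > 0) (n : ℕ) :
    bigM1A α β c n + bigM1C α β c (n + 1) = 1 + (-1 : ℝ) ^ n * c := by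
  have h1 : (2 * (n : ℝ) + α + β + 2) ≠ 0 := by positivity
  have h2 : (2 * ((n : ℝ) + 1) + α + β) ≠ 0 := by positivity
  rcases Nat.even_or_odd n with he | ho
  · have hne : ¬ Even (n + 1) := by simp [Nat.even_add_one, he]
    simp only [bigM1A, bigM1C, if_pos he, if_neg hne, he.neg_one_pow]
    push_cast
    field_simp
    ring
  · have hne : ¬ Even n := Nat.not_even_iff_odd.mpr ho
    have he1 : Even (n + 1) := by simp [Nat.even_add_one, hne]
    simp only [bigM1A, bigM1C, if_neg hne, if_pos he1, ho.neg_one_pow]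
    push_cast
    field_simp
    ring

private lemma bigM1_I2 (α β c : ℝ) (hα : α > 0) (hβ : β > 0) (n : ℕ) :
    bigM1A α β c n * bigM1C α β c n
      = (1 - c ^ 2) * chiharaSigma ((β - 1) / 2) ((α + 1) / 2) n := by
  rcases Nat.even_or_odd n with ⟨m, rfl⟩ | ⟨m, rfl⟩
  · have he : Even (m + m) := ⟨m, rfl⟩
    have hm : (m + m) / 2 = m := by omega
    have hm0 : (0 : ℝ) ≤ (m : ℝ) := Nat.cast_nonneg m
    simp only [bigM1A, bigM1C, chiharaSigma, if_pos he, hm]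
    push_cast
    rw [div_mul_div_comm, ← mul_div_assoc, div_eq_div_iff]
    · ring
    · have h : (0:ℝ) < (2 * ((m:ℝ) + m) + α + β + 2) * (2 * ((m:ℝ) + m) + α + β) := by nlinarith
      exact ne_of_gt h
    · have h : (0:ℝ) < (2 * (m:ℝ) + (β-1)/2 + (α+1)/2) * (2 * (m:ℝ) + (β-1)/2 + (α+1)/2 + 1) := by nlinarith
      exact ne_of_gt h
  · have ho : ¬ Even (2 * m + 1) := by simp [Nat.even_add_one, Nat.even_mul]
    have hm : (2 * m + 1) / 2 = m := by omega
    have hm0 : (0 : ℝ) ≤ (m : ℝ) := Nat.cast_nonneg m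
    simp only [bigM1A, bigM1C, chiharaSigma, if_neg ho, hm]
    push_cast
    rw [div_mul_div_comm, ← mul_div_assoc, div_eq_div_iff]
    · ring
    · have h : (0:ℝ) < (2 * (2*(m:ℝ)+1) + α + β + 2) * (2 * (2*(m:ℝ)+1) + α + β) := by nlinarith
      exact ne_of_gt h
    · have h : (0:ℝ) < (2 * (m:ℝ) + (β-1)/2 + (α+1)/2 + 1) * (2 * (m:ℝ) + (β-1)/2 + (α+1)/2 + 2) := by nlinarith
      exact ne_of_gt h

private lemma chiharaStepG (s c γ A u v σ P T x y J1 J2 E0 E1 E2 : ℝ)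
    (hxy : s * y = -x) (hgam : s * γ = c)
    (hI1 : A + s * v = 1 + P * c) (hI2 : A * u = s * σ)
    (hK : J2 - A * J1 = (x - 1) * P * T * E1)
    (hG : J1 = P * T * (E1 + u * E0))
    (h2 : E2 = (y - P * γ) * E1 - σ * E0) :
    J2 = (-P) * (T * s) * (E2 + v * E1) := by
  linear_combination hK + A * hG + (P * T * s) * h2 + (P * T * E1) * hI1 +
    (P * T * E0) * hI2 + (P * T * E1) * hxy + (-(P * P * T * E1)) * hgam

private lemma chiharaStepK (s A A1 v P T x J1 J2 J3 E1 E2 : ℝ)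
    (hrec : J3 = (x - (1 - A1 - s * v)) * J2 - (A * (s * v)) * J1)
    (hK : J2 - A * J1 = (x - 1) * P * T * E1)
    (hGnew : J2 = (-P) * (T * s) * (E2 + v * E1)) :
    J3 - A1 * J2 = (x - 1) * (-P) * (T * s) * E2 := by
  linear_combination hrec + (s * v) * hK + (x - 1) * hGnew

/-- the big `-1` Jacobi polynomials `Jₙ(x;α,β,c)` and the Chihara
polynomials `Cₙ(x;(β-1)/2,(α+1)/2,c/√(1-c²))` are related by the Christoffel and
Geronimus spectral transformations with spectral parameter 1. -/
theorem bigM1Jacobi_chihara_kernel_partners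
    (α β c : ℝ) (hα : α > 0) (hβ : β > 0) (hc0 : 0 ≤ c) (hc1 : c < 1) (n : ℕ) :
    ∀ x : ℝ,
      (bigM1Jacobi α β c (n + 2)).eval x - bigM1A α β c n * (bigM1Jacobi α β c (n + 1)).eval x =
          (x - 1) * (-1 : ℝ) ^ n * Real.sqrt (1 - c ^ 2) ^ n *
            (chihara ((β - 1) / 2) ((α + 1) / 2) (c / Real.sqrt (1 - c ^ 2)) (n + 1)).eval
              (-x / Real.sqrt (1 - c ^ 2)) ∧
      (bigM1Jacobi α β c (n + 1)).eval x =
          (-1 : ℝ) ^ n * Real.sqrt (1 - c ^ 2) ^ n *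
            ((chihara ((β - 1) / 2) ((α + 1) / 2) (c / Real.sqrt (1 - c ^ 2)) (n + 1)).eval
                (-x / Real.sqrt (1 - c ^ 2))
              + (bigM1C α β c n / Real.sqrt (1 - c ^ 2)) *
                (chihara ((β - 1) / 2) ((α + 1) / 2) (c / Real.sqrt (1 - c ^ 2)) n).eval
                  (-x / Real.sqrt (1 - c ^ 2))) := by
  have hc2 : 0 < 1 - c ^ 2 := by nlinarith
  set s := Real.sqrt (1 - c ^ 2) with hs_def
  have hs_pos : 0 < s := Real.sqrt_pos.mpr hc2
  have hs_ne : s ≠ 0 := ne_of_gt hs_pos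
  have hs_sq : s * s = 1 - c ^ 2 := Real.mul_self_sqrt hc2.le
  induction n with
  | zero =>
    intro x
    constructor
    · simp [bigM1Jacobi, chihara, bigM1A, bigM1C]
      ring
    · simp [bigM1Jacobi, chihara, bigM1C]
  | succ n ih =>
    intro x
    obtain ⟨ihK, ihG⟩ := ih x
    have hgam : s * (c / s) = c := _root_.mul_div_cancel₀ c hs_ne
    have hxy : s * (-x / s) = -x := by rw [mul_comm, div_mul_cancel₀ _ hs_ne]
    have hI1 : bigM1A α β c n + s * (bigM1C α β c (n + 1) / s) = 1 + (-1 : ℝ) ^ n * c := by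
      rw [_root_.mul_div_cancel₀ _ hs_ne]
      exact bigM1_I1 α β c hα hβ n
    have hI2 : bigM1A α β c n * (bigM1C α β c n / s)
        = s * chiharaSigma ((β - 1) / 2) ((α + 1) / 2) n := by
      rw [← mul_div_assoc, div_eq_iff hs_ne]
      linear_combination bigM1_I2 α β c hα hβ n
        - chiharaSigma ((β - 1) / 2) ((α + 1) / 2) n * hs_sq
    have h2 : (chihara ((β - 1) / 2) ((α + 1) / 2) (c / s) (n + 2)).eval (-x / s)
        = ((-x / s) - (-1 : ℝ) ^ n * (c / s)) *
            (chihara ((β - 1) / 2) ((α + 1) / 2) (c / s) (n + 1)).eval (-x / s)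
          - chiharaSigma ((β - 1) / 2) ((α + 1) / 2) n *
            (chihara ((β - 1) / 2) ((α + 1) / 2) (c / s) n).eval (-x / s) := by
      simp [chihara]
    have hGnew : (bigM1Jacobi α β c (n + 2)).eval x
        = (-(-1 : ℝ) ^ n) * (s ^ n * s) *
            ((chihara ((β - 1) / 2) ((α + 1) / 2) (c / s) (n + 2)).eval (-x / s)
              + (bigM1C α β c (n + 1) / s) *
                (chihara ((β - 1) / 2) ((α + 1) / 2) (c / s) (n + 1)).eval (-x / s)) :=
      chiharaStepG s c (c / s) (bigM1A α β c n) (bigM1C α β c n / s)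
        (bigM1C α β c (n + 1) / s) (chiharaSigma ((β - 1) / 2) ((α + 1) / 2) n)
        ((-1 : ℝ) ^ n) (s ^ n) x (-x / s) _ _ _ _ _ hxy hgam hI1 hI2 ihK ihG h2
    constructor
    · have hrec : (bigM1Jacobi α β c (n + 1 + 2)).eval x
          = (x - (1 - bigM1A α β c (n + 1) - s * (bigM1C α β c (n + 1) / s))) *
              (bigM1Jacobi α β c (n + 2)).eval x
            - (bigM1A α β c n * (s * (bigM1C α β c (n + 1) / s))) *
              (bigM1Jacobi α β c (n + 1)).eval x := by
        rw [_root_.mul_div_cancel₀ _ hs_ne]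
        simp [bigM1Jacobi]
      have hres := chiharaStepK s (bigM1A α β c n) (bigM1A α β c (n + 1))
        (bigM1C α β c (n + 1) / s) ((-1 : ℝ) ^ n) (s ^ n) x _ _ _ _ _ hrec ihK hGnew
      rw [pow_succ, pow_succ]
      linear_combination hres
    · rw [pow_succ, pow_succ]
      linear_combination hGnew
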